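/- In G(de,e,2) with d ≥ 3, e ≥ 2, the subgroup H generated by s = (-1,1 | (1 2)) and t = (e,0 | id) has order 2d^2 and index e in G(de,e,2), and the right cosets of H are exactly H(sr)^k for 0 ≤ k < e, where r = (0,0 | (1 2)); that is, (sr)^i and (sr)^j lie in the same right coset of H with 0 ≤ i, j < e only if i = j. -/

import Mathlib

/-- The wreath product `ZMod m ≀ Sₙ`: elements `(a | σ)` with `a : Fin n → ZMod m`
and `σ` a permutation of `{1,…,n}` (i.e. of `Fin n`). -/
structure W (m n : ℕ) : Type where
  a : Fin n → ZMod m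
  p : Equiv.Perm (Fin n)

namespace W

lemma ext' {m n : ℕ} {x y : W m n} (h1 : x.a = y.a) (h2 : x.p = y.p) : x = y := by
  cases x; cases y; cases h1; cases h2; rfl

instance (m n : ℕ) : Mul (W m n) :=
  ⟨fun x y => ⟨fun i => x.a i + y.a (x.p i), y.p * x.p⟩⟩

instance (m n : ℕ) : One (W m n) := ⟨⟨0, 1⟩⟩

instance (m n : ℕ) : Inv (W m n) :=
  ⟨fun x => ⟨fun i => -(x.a (x.p.symm i)), x.p⁻¹⟩⟩

lemma mul_def {m n : ℕ} (x y : W m n) :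
    x * y = ⟨fun i => x.a i + y.a (x.p i), y.p * x.p⟩ := rfl

lemma one_def {m n : ℕ} : (1 : W m n) = ⟨0, 1⟩ := rfl

lemma inv_def {m n : ℕ} (x : W m n) :
    x⁻¹ = ⟨fun i => -(x.a (x.p.symm i)), x.p⁻¹⟩ := rfl

/-- The wreath product group structure, with multiplication
`(a | σ)(b | τ) = (aᵢ + b_{σ(i)} | στ)` (where `στ` means: apply `σ` first). -/
instance (m n : ℕ) : Group (W m n) where
  mul_assoc x y z := by
    refine ext' (funext fun i => ?_) ?_
    · show (x.a i + y.a (x.p i)) + z.a ((y.p * x.p) i)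
        = x.a i + (y.a (x.p i) + z.a (y.p (x.p i)))
      simp [Equiv.Perm.mul_apply, add_assoc]
    · show (z.p * (y.p * x.p)) = (z.p * y.p) * x.p
      exact (mul_assoc _ _ _).symm
  one_mul x := by
    refine ext' (funext fun i => ?_) ?_
    · show 0 + x.a ((1 : Equiv.Perm (Fin _)) i) = x.a i; simp
    · show x.p * 1 = x.p; simp
  mul_one x := by
    refine ext' (funext fun i => ?_) ?_
    · show x.a i + 0 = x.a i; simp
    · show 1 * x.p = x.p; simp
  inv_mul_cancel x := by
    refine ext' (funext fun i => ?_) ?_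
    · simp [mul_def, inv_def, one_def, Equiv.Perm.inv_def]
    · show x.p * x.p⁻¹ = 1; exact mul_inv_cancel x.p

end W

/-- The subgroup of `ZMod m ≀ Sₙ` of elements whose diagonal entries sum to `0 mod e`.
For `m = d*e` this is the imprimitive complex reflection group `G(de,e,n)`. -/
def Gsub (m e n : ℕ) (h : e ∣ m) : Subgroup (W m n) where
  carrier := {x | ZMod.castHom h (ZMod e) (∑ i, x.a i) = 0}
  one_mem' := by simp [W.one_def]
  mul_mem' := by
    intro x y hx hy
    show ZMod.castHom h (ZMod e) (∑ i, (x.a i + y.a (x.p i))) = 0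
    rw [Finset.sum_add_distrib, Equiv.sum_comp x.p y.a, map_add]
    rw [Set.mem_setOf_eq] at hx hy
    rw [hx, hy, add_zero]
  inv_mem' := by
    intro x hx
    show ZMod.castHom h (ZMod e) (∑ i, -(x.a (x.p.symm i))) = 0
    rw [Finset.sum_neg_distrib, Equiv.sum_comp x.p.symm x.a, map_neg]
    rw [Set.mem_setOf_eq] at hx
    rw [hx, neg_zero]

lemma mem_Gsub {m e n : ℕ} (h : e ∣ m) (x : W m n) :
    x ∈ Gsub m e n h ↔ ZMod.castHom h (ZMod e) (∑ i, x.a i) = 0 := Iff.rfl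

/-- The imprimitive complex reflection group `G(de,e,n)`. -/
abbrev Gde (d e n : ℕ) : Subgroup (W (d * e) n) := Gsub (d * e) e n (dvd_mul_left e d)

/-- A Hamiltonian cycle in the (undirected, right) Cayley graph `Γ(G,S)`,
encoded as the list of edge labels (from `S ∪ S⁻¹`) along the cycle starting at `1`:
the partial products visit every element of `G` exactly once and the
total product returns to `1`. -/
def IsHamCycle {G : Type*} [Group G] (S : Set G) (l : List G) : Prop :=
  (∀ x ∈ l, x ∈ S ∨ x⁻¹ ∈ S) ∧ l.prod = 1 ∧ l.length = Nat.card G ∧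
    ((List.range l.length).map fun k => (l.take k).prod).Nodup

/-!
Reducing the entries modulo `e` is a surjective homomorphism `W (de) 2 → W e 2`. The subgroup
`⟨s, t⟩` is the preimage in `G(de,e,2)` of the order-two subgroup generated by the image
`(-1, 1 | (1 2))` of `s`: `t` reduces to `1`, and the kernel of the reduction consists of the
diagonal elements `(ke, le | id) = t^k (sts)^l`. Lagrange's theorem, applied to this reduction and
to the sum-of-entries homomorphism with kernel `G(de,e,2)`, gives the orders, and
`(sr)^i (sr)^{-j} = (j - i, i - j | id)` reduces into the order-two subgroup only if
`i ≡ j mod e`.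
-/

open Function

namespace W

variable {m n : ℕ}

def equivProd (m n : ℕ) : W m n ≃ (Fin n → ZMod m) × Equiv.Perm (Fin n) where
  toFun x := (x.a, x.p)
  invFun q := ⟨q.1, q.2⟩
  left_inv _ := rfl
  right_inv _ := rfl

lemma card_eq (m n : ℕ) : Nat.card (W m n) = m ^ n * n.factorial := by
  rw [Nat.card_congr (equivProd m n), Nat.card_prod, Nat.card_fun, Nat.card_perm,
    Nat.card_zmod, Nat.card_fin]

def map {k : ℕ} (f : ZMod m →+ ZMod k) : W m n →* W k n where
  toFun x := ⟨f ∘ x.a, x.p⟩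
  map_one' := ext' (funext fun _ => map_zero f) rfl
  map_mul' _ _ := ext' (funext fun _ => map_add f _ _) rfl

lemma map_surjective {k : ℕ} {f : ZMod m →+ ZMod k} (hf : Surjective f) :
    Surjective (map f : W m n →* W k n) := fun y =>
  let ⟨a, ha⟩ := hf.comp_left y.a
  ⟨⟨a, y.p⟩, ext' ha rfl⟩

abbrev reduce {e : ℕ} (h : e ∣ m) (n : ℕ) : W m n →* W e n :=
  map (ZMod.castHom h (ZMod e)).toAddMonoidHom

lemma reduce_surjective {e : ℕ} (h : e ∣ m) (n : ℕ) : Surjective (reduce h n) :=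
  map_surjective (ZMod.castHom_surjective h)

def diag : Multiplicative (Fin n → ZMod m) →* W m n where
  toFun a := ⟨a.toAdd, 1⟩
  map_one' := rfl
  map_mul' _ _ := ext' rfl rfl

lemma diag_injective : Injective (diag : Multiplicative (Fin n → ZMod m) →* W m n) :=
  fun _ _ h => congrArg W.a h

lemma eq_diag {x : W m n} (hx : x.p = 1) : x = diag (.ofAdd x.a) := ext' rfl hx

def sumHom : W m n →* Multiplicative (ZMod m) where
  toFun x := .ofAdd (∑ i, x.a i)
  map_one' := by simp [one_def]
  map_mul' x y := by
    simp only [mul_def, Finset.sum_add_distrib, Equiv.sum_comp x.p y.a]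
    rfl

lemma sumHom_apply (x : W m n) : sumHom x = .ofAdd (∑ i, x.a i) := rfl

lemma sumHom_surjective [NeZero n] : Surjective (sumHom : W m n →* Multiplicative (ZMod m)) :=
  fun c => ⟨⟨Pi.single 0 c.toAdd, 1⟩, by rw [sumHom_apply, Finset.sum_pi_single']; simp⟩

end W

lemma Subgroup.card_comap_mul_card_of_surjective {G G' : Type*} [Group G] [Group G']
    {f : G' →* G} (hf : Surjective f) (H : Subgroup G) :
    Nat.card (H.comap f) * Nat.card G = Nat.card G' * Nat.card H := by
  rw [← H.card_mul_index, ← (H.comap f).card_mul_index, H.index_comap_of_surjective hf]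
  ring

lemma ZMod.exists_zsmul_of_castHom_eq_zero {m e : ℕ} (h : e ∣ m) {a : ZMod m}
    (ha : ZMod.castHom h (ZMod e) a = 0) : ∃ k : ℤ, a = k • (e : ZMod m) := by
  rw [← ZMod.intCast_zmod_cast a, map_intCast, ZMod.intCast_zmod_eq_zero_iff_dvd] at ha
  obtain ⟨k, hk⟩ := ha
  exact ⟨k, by rw [← ZMod.intCast_zmod_cast a, hk, zsmul_eq_mul]; push_cast; ring⟩

lemma Gsub_eq_ker {m e : ℕ} (h : e ∣ m) (n : ℕ) :
    Gsub m e n h = (W.sumHom.comp (W.reduce h n)).ker := by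
  ext x
  rw [mem_Gsub, MonoidHom.mem_ker, MonoidHom.comp_apply, W.sumHom_apply, ofAdd_eq_one, map_sum]
  rfl

lemma card_Gsub_mul {m e n : ℕ} [NeZero n] (h : e ∣ m) :
    Nat.card (Gsub m e n h) * e = m ^ n * n.factorial := by
  have hsurj : Surjective (W.sumHom.comp (W.reduce h n)) :=
    W.sumHom_surjective.comp (W.reduce_surjective h n)
  have := Subgroup.card_comap_mul_card_of_surjective hsurj ⊥
  rwa [MonoidHom.comap_bot, ← Gsub_eq_ker, Subgroup.card_bot, mul_one, W.card_eq,
    Nat.card_congr Multiplicative.toAdd, Nat.card_zmod] at this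

def sBar (e : ℕ) : W e 2 := ⟨![-1, 1], Equiv.swap 0 1⟩

lemma sBar_sq (e : ℕ) : sBar e ^ 2 = 1 :=
  W.ext' (funext fun i => by fin_cases i <;> simp [sq, sBar, W.mul_def, W.one_def])
    (Equiv.swap_mul_self 0 1)

lemma orderOf_sBar (e : ℕ) : orderOf (sBar e) = 2 :=
  orderOf_eq_prime (sBar_sq e) fun h => by
    simpa [sBar, W.one_def, Equiv.swap_eq_one_iff] using congrArg W.p h

lemma eq_one_of_mem_zpowers_sBar {e : ℕ} {y : W e 2} (hy : y ∈ Subgroup.zpowers (sBar e))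
    (hp : y.p = 1) : y = 1 := by
  obtain ⟨k, rfl⟩ := Subgroup.mem_zpowers_iff.mp hy
  obtain ⟨l, rfl | rfl⟩ := Int.even_or_odd' k
  · rw [zpow_mul, zpow_ofNat, sBar_sq, one_zpow]
  · rw [zpow_add, zpow_mul, zpow_ofNat, sBar_sq, one_zpow, one_mul, zpow_one] at hp
    simp [sBar, Equiv.swap_eq_one_iff] at hp

lemma zpowers_sBar_le_ker_sumHom (e : ℕ) : Subgroup.zpowers (sBar e) ≤ W.sumHom.ker := by
  rw [Subgroup.zpowers_le, MonoidHom.mem_ker, W.sumHom_apply, ofAdd_eq_one]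
  simp [sBar]

/-- The subgroup `⟨s, t⟩` of `G(de,e,2)` (see `closure_eq_Hsub`). -/
def Hsub (d e : ℕ) : Subgroup (Gde d e 2) :=
  (Subgroup.zpowers (sBar e)).comap ((W.reduce (dvd_mul_left e d) 2).comp (Gde d e 2).subtype)

lemma mem_Hsub_iff {d e : ℕ} {x : Gde d e 2} :
    x ∈ Hsub d e ↔ W.reduce (dvd_mul_left e d) 2 x ∈ Subgroup.zpowers (sBar e) := Iff.rfl

lemma map_subtype_Hsub (d e : ℕ) :
    (Hsub d e).map (Gde d e 2).subtype =
      (Subgroup.zpowers (sBar e)).comap (W.reduce (dvd_mul_left e d) 2) := by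
  rw [Hsub, ← Subgroup.comap_comap, Subgroup.map_comap_eq, Subgroup.range_subtype,
    inf_eq_right, Gde, Gsub_eq_ker, ← MonoidHom.comap_ker]
  exact Subgroup.comap_mono (zpowers_sBar_le_ker_sumHom e)

lemma card_Hsub (d e : ℕ) [NeZero e] : Nat.card (Hsub d e) = 2 * d ^ 2 := by
  have h := Subgroup.card_comap_mul_card_of_surjective (W.reduce_surjective (dvd_mul_left e d) 2)
    (Subgroup.zpowers (sBar e))
  rw [← map_subtype_Hsub, Subgroup.card_map_of_injective (Gde d e 2).subtype_injective,
    W.card_eq, W.card_eq, Nat.card_zpowers, orderOf_sBar, Nat.factorial_two] at h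
  have he : 0 < e ^ 2 * 2 := by have := NeZero.pos e; positivity
  exact Nat.eq_of_mul_eq_mul_right he (by rw [h]; ring)

lemma card_Gde (d e : ℕ) [NeZero e] : Nat.card (Gde d e 2) = 2 * d ^ 2 * e := by
  have h := card_Gsub_mul (n := 2) (dvd_mul_left e d)
  rw [Nat.factorial_two] at h
  exact Nat.eq_of_mul_eq_mul_right (NeZero.pos e) (by rw [h]; ring)

section Generators

variable {d e : ℕ} {s t : Gde d e 2}

lemma reduce_eq_sBar (hs : (s : W (d * e) 2) = ⟨![-1, 1], Equiv.swap 0 1⟩) :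
    W.reduce (dvd_mul_left e d) 2 s = sBar e := by
  rw [hs]
  refine W.ext' (funext fun i => ?_) rfl
  fin_cases i <;> simp [W.map, sBar]

lemma reduce_eq_one (ht : (t : W (d * e) 2) = ⟨![(e : ZMod (d * e)), 0], 1⟩) :
    W.reduce (dvd_mul_left e d) 2 t = 1 := by
  rw [ht]
  refine W.ext' (funext fun i => ?_) rfl
  fin_cases i <;> simp [W.map, W.one_def]

lemma mem_closure_of_reduce_eq_one (hs : (s : W (d * e) 2) = ⟨![-1, 1], Equiv.swap 0 1⟩)
    (ht : (t : W (d * e) 2) = ⟨![(e : ZMod (d * e)), 0], 1⟩) {x : Gde d e 2}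
    (hx : W.reduce (dvd_mul_left e d) 2 x = 1) : x ∈ Subgroup.closure {s, t} := by
  have hp : (x : W (d * e) 2).p = 1 := congrArg W.p hx
  have ha (i : Fin 2) : ZMod.castHom (dvd_mul_left e d) (ZMod e) ((x : W (d * e) 2).a i) = 0 :=
    congrFun (congrArg W.a hx) i
  obtain ⟨k, hk⟩ := ZMod.exists_zsmul_of_castHom_eq_zero _ (ha 0)
  obtain ⟨l, hl⟩ := ZMod.exists_zsmul_of_castHom_eq_zero _ (ha 1)
  have hsts :
      ((s * t * s : Gde d e 2) : W (d * e) 2) = W.diag (.ofAdd ![0, (e : ZMod (d * e))]) := by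
    rw [Subgroup.coe_mul, Subgroup.coe_mul, hs, ht]
    refine W.ext' (funext fun i => ?_) (Equiv.swap_mul_self_mul 0 1 1)
    fin_cases i <;> simp [W.mul_def, W.diag]
  have ht' : (t : W (d * e) 2) = W.diag (.ofAdd ![(e : ZMod (d * e)), 0]) :=
    ht.trans (W.eq_diag rfl)
  have hx_eq : x = t ^ k * (s * t * s) ^ l := by
    apply Subtype.ext
    rw [Subgroup.coe_mul, Subgroup.coe_zpow, Subgroup.coe_zpow, hsts, ht', W.eq_diag hp,
      ← map_zpow (W.diag (m := d * e)), ← map_zpow (W.diag (m := d * e)), ← map_mul]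
    congr 1
    ext i
    fin_cases i <;> simp [hk, hl]
  have hs_mem : s ∈ Subgroup.closure {s, t} := Subgroup.subset_closure (by simp)
  have ht_mem : t ∈ Subgroup.closure {s, t} := Subgroup.subset_closure (by simp)
  rw [hx_eq]
  exact mul_mem (zpow_mem ht_mem k) (zpow_mem (mul_mem (mul_mem hs_mem ht_mem) hs_mem) l)

lemma closure_eq_Hsub (hs : (s : W (d * e) 2) = ⟨![-1, 1], Equiv.swap 0 1⟩)
    (ht : (t : W (d * e) 2) = ⟨![(e : ZMod (d * e)), 0], 1⟩) :
    Subgroup.closure {s, t} = Hsub d e := by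
  apply le_antisymm
  · rw [Subgroup.closure_le, Set.insert_subset_iff, Set.singleton_subset_iff]
    exact ⟨mem_Hsub_iff.mpr ((reduce_eq_sBar hs).symm ▸ Subgroup.mem_zpowers _),
      mem_Hsub_iff.mpr ((reduce_eq_one ht).symm ▸ one_mem _)⟩
  · intro x hx
    obtain ⟨k, hk⟩ := Subgroup.mem_zpowers_iff.mp (mem_Hsub_iff.mp hx)
    have hker : W.reduce (dvd_mul_left e d) 2 (x * s ^ (-k) : Gde d e 2) = 1 := by
      rw [Subgroup.coe_mul, map_mul, Subgroup.coe_zpow, map_zpow, reduce_eq_sBar hs,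
        ← hk, ← zpow_add, add_neg_cancel, zpow_zero]
    simpa using mul_mem (mem_closure_of_reduce_eq_one hs ht hker)
      (zpow_mem (Subgroup.subset_closure (by simp) : s ∈ Subgroup.closure {s, t}) k)

end Generators

lemma eq_of_pow_mul_inv_pow_mem_Hsub {d e : ℕ} {s r : Gde d e 2}
    (hs : (s : W (d * e) 2) = ⟨![-1, 1], Equiv.swap 0 1⟩)
    (hr : (r : W (d * e) 2) = ⟨![0, 0], Equiv.swap 0 1⟩) {i j : ℕ} (hi : i < e) (hj : j < e)
    (h : (s * r) ^ i * ((s * r) ^ j)⁻¹ ∈ Hsub d e) : i = j := by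
  have hsr : W.reduce (dvd_mul_left e d) 2 (s * r : Gde d e 2) = W.diag (.ofAdd ![-1, 1]) := by
    rw [Subgroup.coe_mul, hs, hr]
    refine W.ext' (funext fun k => ?_) (Equiv.swap_mul_self 0 1)
    fin_cases k <;> simp [W.mul_def, W.map, W.diag]
  rw [mem_Hsub_iff, Subgroup.coe_mul, Subgroup.coe_inv, Subgroup.coe_pow, Subgroup.coe_pow,
    map_mul, map_inv, map_pow, map_pow, hsr, ← map_pow (W.diag (m := e)),
    ← map_pow (W.diag (m := e)), ← map_inv (W.diag (m := e)), ← map_mul] at h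
  have h1 := congrFun (congrArg Multiplicative.toAdd
    ((map_eq_one_iff _ W.diag_injective).mp (eq_one_of_mem_zpowers_sBar h rfl))) 1
  have hij : (i : ZMod e) = j := by
    rw [← sub_eq_zero, sub_eq_add_neg]
    simpa using h1
  rwa [ZMod.natCast_eq_natCast_iff', Nat.mod_eq_of_lt hi, Nat.mod_eq_of_lt hj] at hij

/-- In `G(de,e,2)` with `d ≥ 3`, `e ≥ 2`, the subgroup
`H = ⟨s, t⟩` has order `2d²` and index `e`, and the right cosets of `H` are exactly
`H(sr)^k` for `0 ≤ k < e`: `(sr)ⁱ` and `(sr)ʲ` lie in the same right coset of `H`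
with `0 ≤ i, j < e` only if `i = j`. -/
theorem stmt9 (d e : ℕ) (hd : 3 ≤ d) (he : 2 ≤ e)
    (s t r : Gde d e 2)
    (hs : (s : W (d * e) 2) = ⟨![-1, 1], Equiv.swap 0 1⟩)
    (ht : (t : W (d * e) 2) = ⟨![(e : ZMod (d * e)), 0], 1⟩)
    (hr : (r : W (d * e) 2) = ⟨![0, 0], Equiv.swap 0 1⟩)
    (H : Subgroup (Gde d e 2)) (hH : H = Subgroup.closure {s, t}) :
    Nat.card H = 2 * d ^ 2 ∧ H.index = e ∧
    ∀ i < e, ∀ j < e, (s * r) ^ i * ((s * r) ^ j)⁻¹ ∈ H → i = j := by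
  have : NeZero e := ⟨by omega⟩
  subst hH
  rw [closure_eq_Hsub hs ht]
  have hcard := card_Hsub d e
  refine ⟨hcard, ?_, fun i hi j hj h => eq_of_pow_mul_inv_pow_mem_Hsub hs hr hi hj h⟩
  have h := (Hsub d e).card_mul_index
  rw [hcard, card_Gde] at h
  exact Nat.eq_of_mul_eq_mul_left (show 0 < 2 * d ^ 2 by positivity) h
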